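/- arXiv:1710.02879 — 3 statements merged into one kernel-verified Lean document; each statement's English description precedes it below -/
import Mathlib

section
/- Let ε = ε_1⋯ε_r ∈ EO^1_{2n}(R,I) be a product of r elementary generators and let oe_{ij}(X f(X)) be an elementary generator of EO^1_{2n}(R[X], I[X]). Then ε·oe_{ij}(Y^{4^r} X f(Y^{4^r} X))·ε^{-1} can be written as a product ∏_{t=1}^s oe_{i_t j_t}(Y h_t(X,Y)) where for each t either i_t = 1 or j_t = 1, with h_t ∈ R[X,Y] when i_t = 1 and h_t ∈ I[X,Y] when j_t = 1. -/
open Matrix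

/-- The permutation σ of the index set {1,…,2n}, encoded as `Fin n × Fin 2`,
which swaps 2i−1 and 2i. The index 1 corresponds to ((0 : Fin n), (0 : Fin 2)). -/
def sw {n : ℕ} (p : Fin n × Fin 2) : Fin n × Fin 2 := (p.1, 1 - p.2)

/-- The elementary orthogonal generator oe_{ij}(z) = I + z e_{ij} − z e_{σ(j)σ(i)}. -/
def oe {n : ℕ} (R : Type*) [CommRing R] (i j : Fin n × Fin 2) (z : R) :
    Matrix (Fin n × Fin 2) (Fin n × Fin 2) R :=
  1 + z • Matrix.single i j (1 : R) - z • Matrix.single (sw j) (sw i) (1 : R)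

variable (n : ℕ) (R : Type*) [CommRing R]

/-- The elementary orthogonal group EO_{2n}(R), generated by the elementary
orthogonal matrices oe_{ij}(z), z ∈ R, i ≠ j, i ≠ σ(j). -/
def EO : Subgroup (GL (Fin n × Fin 2) R) :=
  Subgroup.closure {g | ∃ i j : Fin n × Fin 2, ∃ z : R, i ≠ j ∧ i ≠ sw j ∧
    (g : Matrix (Fin n × Fin 2) (Fin n × Fin 2) R) = oe R i j z}

/-- The group EO_{2n}(I), generated by the oe_{ij}(x) with x ∈ I. -/
def EOI (I : Ideal R) : Subgroup (GL (Fin n × Fin 2) R) :=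
  Subgroup.closure {g | ∃ i j : Fin n × Fin 2, ∃ x : R, x ∈ I ∧ i ≠ j ∧ i ≠ sw j ∧
    (g : Matrix (Fin n × Fin 2) (Fin n × Fin 2) R) = oe R i j x}

/-- The relative elementary orthogonal group EO_{2n}(R, I): the normal closure of
EO_{2n}(I) in EO_{2n}(R). -/
def EORel (I : Ideal R) : Subgroup (GL (Fin n × Fin 2) R) :=
  Subgroup.closure {g | ∃ e ∈ EO n R, ∃ h ∈ EOI n R I, g = e * h * e⁻¹}

/-- The group EO^1_{2n}(R,I), generated by oe_{1i}(a) (a ∈ R) and oe_{j1}(x) (x ∈ I)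
for indices i, j ∈ {3,…,2n}, i.e. indices whose first coordinate is nonzero. -/
def EO1 (I : Ideal R) [NeZero n] : Subgroup (GL (Fin n × Fin 2) R) :=
  Subgroup.closure {g | ∃ p : Fin n × Fin 2, p.1 ≠ 0 ∧
    ((∃ a : R, (g : Matrix (Fin n × Fin 2) (Fin n × Fin 2) R) = oe R (0, 0) p a) ∨
      (∃ x ∈ I, (g : Matrix (Fin n × Fin 2) (Fin n × Fin 2) R) = oe R p (0, 0) x))}

namespace Test
variable {n : ℕ} {S : Type*} [CommRing S]

lemma sw_sw (p : Fin n × Fin 2) : sw (sw p) = p := by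
  have : ∀ x : Fin 2, 1 - (1 - x) = x := by decide
  simp [sw, this]

lemma sw_ne_sw {p q : Fin n × Fin 2} (h : p ≠ q) : sw p ≠ sw q := by
  intro he; apply h; rw [← sw_sw p, he, sw_sw]

lemma ne_sw_self (p : Fin n × Fin 2) : p ≠ sw p := by
  have : ∀ x : Fin 2, x ≠ 1 - x := by decide
  intro he; exact this p.2 (congrArg Prod.snd he)

lemma sw_ne_self (p : Fin n × Fin 2) : sw p ≠ p := (ne_sw_self p).symm

lemma ne_sw_comm {p q : Fin n × Fin 2} (h : p ≠ sw q) : q ≠ sw p := by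
  intro he; exact h (by rw [he, sw_sw])

lemma sw_ne_of_ne_sw {p q : Fin n × Fin 2} (h : p ≠ sw q) : sw p ≠ q := by
  intro he; apply h; rw [← he]; exact (sw_sw p).symm

lemma oe_eq (i j : Fin n × Fin 2) (z : S) :
    oe S i j z = 1 + Matrix.single i j z - Matrix.single (sw j) (sw i) z := by
  simp [oe, smul_single, smul_eq_mul]

lemma B_neg (i j : Fin n × Fin 2) (z : S) :
    Matrix.single i j (-z) = -Matrix.single i j z := by
  rw [← neg_one_smul S (Matrix.single i j z), smul_single, neg_one_smul]

lemma Bmul_ne {j k : Fin n × Fin 2} (i l : Fin n × Fin 2) (c d : S) (h : j ≠ k) :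
    Matrix.single i j c * Matrix.single k l d = 0 :=
  Matrix.single_mul_single_of_ne (c := c) i j _ h d

lemma Bmul_eq (i j l : Fin n × Fin 2) (c d : S) :
    Matrix.single i j c * Matrix.single j l d = Matrix.single i l (c * d) :=
  Matrix.single_mul_single_same (c := c) _ _ _ _

-- I1
lemma oe_mul_oe_neg (i j : Fin n × Fin 2) (z : S) (h1 : i ≠ j) (h2 : i ≠ sw j) :
    oe S i j z * oe S i j (-z) = 1 := by
  simp only [oe_eq, B_neg, mul_add, add_mul, mul_sub, sub_mul, mul_one, one_mul, mul_neg,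
    neg_mul, neg_neg, Bmul_eq,
    Bmul_ne _ _ _ _ h1.symm, Bmul_ne _ _ _ _ (ne_sw_self j), Bmul_ne _ _ _ _ (sw_ne_self i),
    Bmul_ne _ _ _ _ (sw_ne_sw h1), Bmul_ne _ _ _ _ (ne_sw_comm h2),
    Bmul_ne _ _ _ _ (sw_ne_of_ne_sw h2)]
  abel

-- I3 chain
lemma oe_chain (a b c : Fin n × Fin 2) (x y : S)
    (hab : a ≠ b) (hbc : b ≠ c) (hac : a ≠ c)
    (hab' : a ≠ sw b) (hbc' : b ≠ sw c) (hac' : a ≠ sw c) :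
    oe S a b x * oe S b c y = oe S b c y * oe S a c (x * y) * oe S a b x := by
  simp only [oe_eq, B_neg, mul_add, add_mul, mul_sub, sub_mul, mul_one, one_mul, mul_neg,
    neg_mul, neg_neg, Bmul_eq,
    Bmul_ne _ _ _ _ hab.symm, Bmul_ne _ _ _ _ hbc.symm, Bmul_ne _ _ _ _ hac.symm,
    Bmul_ne _ _ _ _ (sw_ne_sw hab), Bmul_ne _ _ _ _ (sw_ne_sw hbc), Bmul_ne _ _ _ _ (sw_ne_sw hac),
    Bmul_ne _ _ _ _ hab', Bmul_ne _ _ _ _ hbc', Bmul_ne _ _ _ _ hac',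
    Bmul_ne _ _ _ _ (ne_sw_comm hab'), Bmul_ne _ _ _ _ (ne_sw_comm hbc'), Bmul_ne _ _ _ _ (ne_sw_comm hac'),
    Bmul_ne _ _ _ _ (sw_ne_of_ne_sw hab'), Bmul_ne _ _ _ _ (sw_ne_of_ne_sw hbc'), Bmul_ne _ _ _ _ (sw_ne_of_ne_sw hac'),
    Bmul_ne _ _ _ _ (sw_ne_of_ne_sw (ne_sw_comm hab')), Bmul_ne _ _ _ _ (sw_ne_of_ne_sw (ne_sw_comm hbc')), Bmul_ne _ _ _ _ (sw_ne_of_ne_sw (ne_sw_comm hac')),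
    Bmul_ne _ _ _ _ (ne_sw_self a), Bmul_ne _ _ _ _ (ne_sw_self b), Bmul_ne _ _ _ _ (ne_sw_self c),
    Bmul_ne _ _ _ _ (sw_ne_self a), Bmul_ne _ _ _ _ (sw_ne_self b), Bmul_ne _ _ _ _ (sw_ne_self c)]
  rw [mul_comm y x]
  abel

-- appended to base+idents
-- C1: fully disjoint commute
lemma oe_comm₁ (i j k l : Fin n × Fin 2) (x y : S)
    (h1 : j ≠ k) (h2 : i ≠ l) (h3 : j ≠ sw l) (h4 : i ≠ sw k) :
    oe S i j x * oe S k l y = oe S k l y * oe S i j x := by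
  simp only [oe_eq, B_neg, mul_add, add_mul, mul_sub, sub_mul, mul_one, one_mul, mul_neg,
    neg_mul, neg_neg, Bmul_eq,
    Bmul_ne _ _ _ _ h1, Bmul_ne _ _ _ _ h2.symm, Bmul_ne _ _ _ _ h3,
    Bmul_ne _ _ _ _ (ne_sw_comm h3), Bmul_ne _ _ _ _ (sw_ne_of_ne_sw h4),
    Bmul_ne _ _ _ _ (sw_ne_of_ne_sw (ne_sw_comm h4)),
    Bmul_ne _ _ _ _ (sw_ne_sw h2), Bmul_ne _ _ _ _ (sw_ne_sw h1).symm]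
  abel

-- C2: same first index
lemma oe_comm₂ (i j l : Fin n × Fin 2) (x y : S)
    (h1 : i ≠ j) (h2 : i ≠ l) (h3 : i ≠ sw j) (h4 : i ≠ sw l) :
    oe S i j x * oe S i l y = oe S i l y * oe S i j x := by
  by_cases hjl : j = sw l
  · subst hjl
    simp only [oe_eq, B_neg, mul_add, add_mul, mul_sub, sub_mul, mul_one, one_mul, mul_neg,
      neg_mul, neg_neg, Bmul_eq, sw_sw,
      Bmul_ne _ _ _ _ (sw_ne_of_ne_sw h4), Bmul_ne _ _ _ _ h2.symm,
      Bmul_ne _ _ _ _ (ne_sw_comm h3), Bmul_ne _ _ _ _ (sw_ne_self i),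
      Bmul_ne _ _ _ _ (sw_ne_self l), Bmul_ne _ _ _ _ (ne_sw_self i), Bmul_ne _ _ _ _ (ne_sw_self l),
      Bmul_ne _ _ _ _ (sw_ne_sw h2), Bmul_ne _ _ _ _ (ne_sw_comm h4), Bmul_ne _ _ _ _ h1.symm,
      Bmul_ne _ _ _ _ (sw_ne_sw h1).symm]
    rw [mul_comm y x]
    abel
  · exact oe_comm₁ i j i l x y h1.symm h2 hjl (ne_sw_self i)

-- I0
lemma oe_swap (i j : Fin n × Fin 2) (z : S) :
    oe S i j z = oe S (sw j) (sw i) (-z) := by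
  simp only [oe_eq, B_neg, sw_sw, neg_neg]
  abel

-- C3: same second index
lemma oe_comm₃ (i j k : Fin n × Fin 2) (x y : S)
    (h1 : i ≠ j) (h2 : k ≠ j) (h3 : i ≠ sw j) (h4 : k ≠ sw j) :
    oe S i j x * oe S k j y = oe S k j y * oe S i j x := by
  rw [oe_swap i j x, oe_swap k j y]
  exact oe_comm₂ (sw j) (sw i) (sw k) (-x) (-y) (sw_ne_sw h1).symm (sw_ne_sw h2).symm
    (sw_ne_sw (ne_sw_comm h3)) (sw_ne_sw (ne_sw_comm h4))

-- C4: anti-diagonal pair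
lemma oe_comm₄ (i j : Fin n × Fin 2) (x y : S) (h1 : i ≠ j) (h2 : i ≠ sw j) :
    oe S i j x * oe S (sw j) i y = oe S (sw j) i y * oe S i j x := by
  simp only [oe_eq, B_neg, sw_sw, mul_add, add_mul, mul_sub, sub_mul, mul_one, one_mul, mul_neg,
    neg_mul, neg_neg, Bmul_eq,
    Bmul_ne _ _ _ _ (ne_sw_self j), Bmul_ne _ _ _ _ (ne_sw_comm h2),
    Bmul_ne _ _ _ _ (sw_ne_sw h1).symm, Bmul_ne _ _ _ _ (sw_ne_sw h1), Bmul_ne _ _ _ _ h2, Bmul_ne _ _ _ _ h1.symm,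
    Bmul_ne _ _ _ _ (sw_ne_self j)]
  rw [mul_comm y x]
  abel

-- I3' : conjugation of oe_ca by oe_ab
lemma oe_chain' (a b c : Fin n × Fin 2) (x y : S)
    (hab : a ≠ b) (hbc : b ≠ c) (hac : a ≠ c)
    (hab' : a ≠ sw b) (hca' : c ≠ sw a) (hcb' : c ≠ sw b) :
    oe S a b x * oe S c a y = oe S c a y * oe S c b (-(y*x)) * oe S a b x := by
  simp only [oe_eq, B_neg, neg_neg, mul_add, add_mul, mul_sub, sub_mul, mul_one, one_mul, mul_neg,
    neg_mul, Bmul_eq,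
    Bmul_ne _ _ _ _ hbc, Bmul_ne _ _ _ _ hbc.symm, Bmul_ne _ _ _ _ hac, Bmul_ne _ _ _ _ hac.symm,
    Bmul_ne _ _ _ _ hab, Bmul_ne _ _ _ _ hab.symm,
    Bmul_ne _ _ _ _ (sw_ne_sw hab), Bmul_ne _ _ _ _ (sw_ne_sw hab).symm,
    Bmul_ne _ _ _ _ (sw_ne_sw hbc), Bmul_ne _ _ _ _ (sw_ne_sw hbc).symm,
    Bmul_ne _ _ _ _ (sw_ne_sw hac), Bmul_ne _ _ _ _ (sw_ne_sw hac).symm,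
    Bmul_ne _ _ _ _ hab', Bmul_ne _ _ _ _ (ne_sw_comm hab'),
    Bmul_ne _ _ _ _ (sw_ne_of_ne_sw hab'), Bmul_ne _ _ _ _ (sw_ne_of_ne_sw (ne_sw_comm hab')),
    Bmul_ne _ _ _ _ hca', Bmul_ne _ _ _ _ (ne_sw_comm hca'),
    Bmul_ne _ _ _ _ (sw_ne_of_ne_sw hca'), Bmul_ne _ _ _ _ (sw_ne_of_ne_sw (ne_sw_comm hca')),
    Bmul_ne _ _ _ _ hcb', Bmul_ne _ _ _ _ (ne_sw_comm hcb'),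
    Bmul_ne _ _ _ _ (sw_ne_of_ne_sw hcb'), Bmul_ne _ _ _ _ (sw_ne_of_ne_sw (ne_sw_comm hcb')),
    Bmul_ne _ _ _ _ (ne_sw_self a), Bmul_ne _ _ _ _ (ne_sw_self b), Bmul_ne _ _ _ _ (ne_sw_self c),
    Bmul_ne _ _ _ _ (sw_ne_self a), Bmul_ne _ _ _ _ (sw_ne_self b), Bmul_ne _ _ _ _ (sw_ne_self c)]
  rw [mul_comm y x]
  abel

-- map lemma
lemma B_map {R S : Type*} [CommRing R] [CommRing S] (φ : R →+* S) (i j : Fin n × Fin 2) (c : R) :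
    (Matrix.single i j c).map φ = Matrix.single i j (φ c) := by
  ext a b
  simp [Matrix.single, Matrix.map_apply, apply_ite φ]

lemma oe_map {R S : Type*} [CommRing R] [CommRing S] (φ : R →+* S) (i j : Fin n × Fin 2) (z : R) :
    (oe R i j z).map φ = oe S i j (φ z) := by
  simp only [oe_eq]
  ext a b
  simp [Matrix.map_apply, Matrix.single, Matrix.one_apply, apply_ite φ]

-- units layer
def uoe (i j : Fin n × Fin 2) (z : S) : GL (Fin n × Fin 2) S :=
  if h : i ≠ j ∧ i ≠ sw j then
    ⟨oe S i j z, oe S i j (-z), oe_mul_oe_neg i j z h.1 h.2, by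
      have := oe_mul_oe_neg i j (-z) h.1 h.2
      rwa [neg_neg] at this⟩
  else 1

variable {i j : Fin n × Fin 2} {z : S}

lemma uoe_coe (h1 : i ≠ j) (h2 : i ≠ sw j) (z : S) :
    (uoe i j z : Matrix (Fin n × Fin 2) (Fin n × Fin 2) S) = oe S i j z := by
  rw [uoe, dif_pos ⟨h1, h2⟩]

lemma uoe_inv (h1 : i ≠ j) (h2 : i ≠ sw j) (z : S) : (uoe i j z)⁻¹ = uoe i j (-z) := by
  apply Units.ext
  have : (uoe i j z)⁻¹.val = (uoe i j z).inv := rfl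
  rw [this, uoe, dif_pos ⟨h1, h2⟩, uoe_coe h1 h2]

lemma eq_uoe (h1 : i ≠ j) (h2 : i ≠ sw j) (g : GL (Fin n × Fin 2) S)
    (hg : (g : Matrix (Fin n × Fin 2) (Fin n × Fin 2) S) = oe S i j z) : g = uoe i j z :=
  Units.ext (by rw [hg, uoe_coe h1 h2])

lemma guoe_swap (h1 : i ≠ j) (h2 : i ≠ sw j) (z : S) :
    uoe i j z = uoe (sw j) (sw i) (-z) := by
  apply Units.ext
  rw [uoe_coe h1 h2, uoe_coe (sw_ne_sw h1).symm (sw_ne_sw (ne_sw_comm h2)), oe_swap]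

section grouplevel
variable {a b c : Fin n × Fin 2}

lemma gchain (hab : a ≠ b) (hbc : b ≠ c) (hac : a ≠ c)
    (hab' : a ≠ sw b) (hbc' : b ≠ sw c) (hac' : a ≠ sw c) (x y : S) :
    uoe a b x * uoe b c y = uoe b c y * uoe a c (x*y) * uoe a b x := by
  apply Units.ext
  push_cast [uoe_coe hab hab', uoe_coe hbc hbc', uoe_coe hac hac']
  exact oe_chain a b c x y hab hbc hac hab' hbc' hac'

lemma gconj_chain (hab : a ≠ b) (hbc : b ≠ c) (hac : a ≠ c)
    (hab' : a ≠ sw b) (hbc' : b ≠ sw c) (hac' : a ≠ sw c) (x y : S) :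
    uoe a b x * uoe b c y * (uoe a b x)⁻¹ = uoe b c y * uoe a c (x*y) := by
  rw [gchain hab hbc hac hab' hbc' hac' x y, mul_assoc, mul_inv_cancel, mul_one]

lemma gchain' (hab : a ≠ b) (hbc : b ≠ c) (hac : a ≠ c)
    (hab' : a ≠ sw b) (hca' : c ≠ sw a) (hcb' : c ≠ sw b) (x y : S) :
    uoe a b x * uoe c a y = uoe c a y * uoe c b (-(y*x)) * uoe a b x := by
  apply Units.ext
  push_cast [uoe_coe hab hab', uoe_coe hac.symm hca', uoe_coe hbc.symm hcb']
  exact oe_chain' a b c x y hab hbc hac hab' hca' hcb'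

end grouplevel

-- commuting wrappers at unit level
section gcomm
variable {i j k l : Fin n × Fin 2}

lemma conj_of_comm {G : Type*} [Group G] {e g : G} (h : e * g = g * e) : e * g * e⁻¹ = g := by
  rw [h, mul_assoc, mul_inv_cancel, mul_one]

lemma gcomm₁ (hij : i ≠ j) (hij' : i ≠ sw j) (hkl : k ≠ l) (hkl' : k ≠ sw l)
    (h1 : j ≠ k) (h2 : i ≠ l) (h3 : j ≠ sw l) (h4 : i ≠ sw k) (x y : S) :
    uoe i j x * uoe k l y = uoe k l y * uoe i j x := by
  apply Units.ext
  push_cast [uoe_coe hij hij', uoe_coe hkl hkl']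
  exact oe_comm₁ i j k l x y h1 h2 h3 h4

lemma gcomm₂ (hij : i ≠ j) (hij' : i ≠ sw j) (hil : i ≠ l) (hil' : i ≠ sw l) (x y : S) :
    uoe i j x * uoe i l y = uoe i l y * uoe i j x := by
  apply Units.ext
  push_cast [uoe_coe hij hij', uoe_coe hil hil']
  exact oe_comm₂ i j l x y hij hil hij' hil'

lemma gcomm₃ (hij : i ≠ j) (hij' : i ≠ sw j) (hkj : k ≠ j) (hkj' : k ≠ sw j) (x y : S) :
    uoe i j x * uoe k j y = uoe k j y * uoe i j x := by
  apply Units.ext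
  push_cast [uoe_coe hij hij', uoe_coe hkj hkj']
  exact oe_comm₃ i j k x y hij hkj hij' hkj'

lemma gcomm₄ (hij : i ≠ j) (hij' : i ≠ sw j) (x y : S) :
    uoe i j x * uoe (sw j) i y = uoe (sw j) i y * uoe i j x := by
  apply Units.ext
  push_cast [uoe_coe hij hij', uoe_coe hij'.symm (sw_ne_sw hij).symm]
  exact oe_comm₄ i j x y hij hij'

lemma gconj_chain' {a b c : Fin n × Fin 2} (hab : a ≠ b) (hbc : b ≠ c) (hac : a ≠ c)
    (hab' : a ≠ sw b) (hca' : c ≠ sw a) (hcb' : c ≠ sw b) (x y : S) :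
    uoe a b x * uoe c a y * (uoe a b x)⁻¹ = uoe c a y * uoe c b (-(y*x)) := by
  rw [gchain' hab hbc hac hab' hca' hcb' x y, mul_assoc, mul_inv_cancel, mul_one]

end gcomm

section Membership
variable [NeZero n] {R : Type*} [CommRing R] (I : Ideal R)

local notation "SS" => MvPolynomial (Fin 2) R
local notation "YY" => (MvPolynomial.X 1 : MvPolynomial (Fin 2) R)

def Jset : Ideal (MvPolynomial (Fin 2) R) where
  carrier := {h | ∀ m, MvPolynomial.coeff m h ∈ I}
  add_mem' := fun ha hb m => by simpa [MvPolynomial.coeff_add] using I.add_mem (ha m) (hb m)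
  zero_mem' := fun m => by simpa [MvPolynomial.coeff_zero] using I.zero_mem
  smul_mem' := fun c {x} hx m => by
    rw [smul_eq_mul, MvPolynomial.coeff_mul]
    exact Ideal.sum_mem I (fun p _ => I.mul_mem_left _ (hx p.2))

lemma C_mem_Jset {x : R} (hx : x ∈ I) : (MvPolynomial.C x : SS) ∈ Jset I := by
  intro m
  rw [MvPolynomial.coeff_C]
  split
  · exact hx
  · exact I.zero_mem

-- index helpers
lemma ne_of_fst_ne {p q : Fin n × Fin 2} (h : p.1 ≠ q.1) : p ≠ q :=
  fun he => h (congrArg Prod.fst he)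
lemma fst_sw (p : Fin n × Fin 2) : (sw p).1 = p.1 := rfl

def TS (m : ℕ) : Set (GL (Fin n × Fin 2) (MvPolynomial (Fin 2) R)) :=
  {g | ∃ p h, p.1 ≠ 0 ∧
    ((g : Matrix (Fin n × Fin 2) (Fin n × Fin 2) (MvPolynomial (Fin 2) R)) =
        oe (MvPolynomial (Fin 2) R) (0, 0) p (YY ^ m * h) ∨
      (h ∈ Jset I ∧
        (g : Matrix (Fin n × Fin 2) (Fin n × Fin 2) (MvPolynomial (Fin 2) R)) =
          oe (MvPolynomial (Fin 2) R) p (0, 0) (YY ^ m * h)))}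

noncomputable def Hgr (m : ℕ) : Subgroup (GL (Fin n × Fin 2) (MvPolynomial (Fin 2) R)) :=
  Subgroup.closure (TS I m)

section idx
variable {p q : Fin n × Fin 2}

lemma idx1 (hp : p.1 ≠ 0) : ((0,0) : Fin n × Fin 2) ≠ p := fun he => hp (congrArg Prod.fst he).symm
lemma idx2 (hp : p.1 ≠ 0) : ((0,0) : Fin n × Fin 2) ≠ sw p := fun he => hp (congrArg Prod.fst he).symm
lemma idx3 (hp : p.1 ≠ 0) : p ≠ ((0,0) : Fin n × Fin 2) := (idx1 hp).symm
lemma idx4 (hp : p.1 ≠ 0) : p ≠ sw ((0,0) : Fin n × Fin 2) := fun he => hp (congrArg Prod.fst he)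
lemma idx5 (hp : p.1 ≠ 0) : sw p ≠ ((0,0) : Fin n × Fin 2) := (idx2 hp).symm

end idx

lemma mem_row {m : ℕ} {p : Fin n × Fin 2} (hp : p.1 ≠ 0) {w : MvPolynomial (Fin 2) R}
    (hw : ∃ h, w = YY ^ m * h) : uoe (0,0) p w ∈ Hgr I m := by
  obtain ⟨h, rfl⟩ := hw
  apply Subgroup.subset_closure
  exact ⟨p, h, hp, Or.inl (uoe_coe (idx1 hp) (idx2 hp) _)⟩

lemma mem_col {m : ℕ} {p : Fin n × Fin 2} (hp : p.1 ≠ 0) {w : MvPolynomial (Fin 2) R}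
    (hw : ∃ h ∈ Jset I, w = YY ^ m * h) : uoe p (0,0) w ∈ Hgr I m := by
  obtain ⟨h, hh, rfl⟩ := hw
  apply Subgroup.subset_closure
  exact ⟨p, h, hp, Or.inr ⟨hh, uoe_coe (idx3 hp) (idx4 hp) _⟩⟩

lemma mem_two {m : ℕ} {q s : Fin n × Fin 2} (hq : q.1 ≠ 0) (hs : s.1 ≠ 0)
    (hqs : q ≠ s) (hqs' : q ≠ sw s) {w : MvPolynomial (Fin 2) R}
    (hw : ∃ h ∈ Jset I, w = (YY ^ m * h) * YY ^ m) : uoe q s w ∈ Hgr I m := by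
  obtain ⟨h, hh, rfl⟩ := hw
  have key := gchain (a := q) (b := ((0,0) : Fin n × Fin 2)) (c := s)
    (idx3 hq) (idx1 hs) hqs (idx4 hq) (idx2 hs) hqs' (YY ^ m * h) (YY ^ m)
  have : uoe q s ((YY ^ m * h) * YY ^ m) =
      (uoe ((0,0) : Fin n × Fin 2) s (YY ^ m))⁻¹ * (uoe q (0,0) (YY ^ m * h) *
        uoe ((0,0) : Fin n × Fin 2) s (YY ^ m)) * (uoe q (0,0) (YY ^ m * h))⁻¹ := by
    rw [key]; group
  rw [this]
  exact Subgroup.mul_mem _ (Subgroup.mul_mem _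
    (Subgroup.inv_mem _ (mem_row I hs ⟨1, (mul_one _).symm⟩))
    (Subgroup.mul_mem _ (mem_col I hq ⟨h, hh, rfl⟩) (mem_row I hs ⟨1, (mul_one _).symm⟩)))
    (Subgroup.inv_mem _ (mem_col I hq ⟨h, hh, rfl⟩))

lemma TS_mono {m m' : ℕ} (hm : m' ≤ m) : TS I m ⊆ TS (n := n) I m' := by
  rintro g ⟨p, h, hp, hg | ⟨hh, hg⟩⟩
  · refine ⟨p, YY ^ (m - m') * h, hp, Or.inl ?_⟩
    rwa [← mul_assoc, ← pow_add, Nat.add_sub_cancel' hm]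
  · refine ⟨p, YY ^ (m - m') * h, hp, Or.inr ⟨Ideal.mul_mem_left _ _ hh, ?_⟩⟩
    rwa [← mul_assoc, ← pow_add, Nat.add_sub_cancel' hm]


lemma idx6 {p : Fin n × Fin 2} (hp : p.1 ≠ 0) : sw ((0,0) : Fin n × Fin 2) ≠ p :=
  fun he => hp (congrArg Prod.fst he).symm
lemma idx7 {p : Fin n × Fin 2} (hp : p.1 ≠ 0) : p ≠ sw ((0,0) : Fin n × Fin 2) := (idx6 hp).symm

set_option maxHeartbeats 1000000 in
lemma conj_norm {m : ℕ} {q s : Fin n × Fin 2} (hq : q.1 ≠ 0) (hs : s.1 ≠ 0)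
    (hqs : q ≠ s) (hqs' : q ≠ sw s) (v : MvPolynomial (Fin 2) R)
    {x : GL (Fin n × Fin 2) (MvPolynomial (Fin 2) R)} (hx : x ∈ Hgr I m) :
    uoe q s v * x * (uoe q s v)⁻¹ ∈ Hgr I m := by
  induction hx using Subgroup.closure_induction with
  | one =>
    have : uoe q s v * 1 * (uoe q s v)⁻¹ = 1 := by group
    rw [this]; exact Subgroup.one_mem _
  | mul a b ha hb iha ihb =>
    have : uoe q s v * (a * b) * (uoe q s v)⁻¹ =
        (uoe q s v * a * (uoe q s v)⁻¹) * (uoe q s v * b * (uoe q s v)⁻¹) := by group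
    rw [this]; exact Subgroup.mul_mem _ iha ihb
  | inv a ha iha =>
    have : uoe q s v * a⁻¹ * (uoe q s v)⁻¹ = (uoe q s v * a * (uoe q s v)⁻¹)⁻¹ := by group
    rw [this]; exact Subgroup.inv_mem _ iha
  | mem g hg =>
    have hgmem : g ∈ Hgr I m := Subgroup.subset_closure hg
    obtain ⟨p, h, hp, hrow | ⟨hh, hcol⟩⟩ := hg
    · -- row generator
      have hgeq : g = uoe (0,0) p (YY ^ m * h) := eq_uoe (idx1 hp) (idx2 hp) g hrow
      by_cases h1 : p = q
      · subst h1
        rw [hgeq, gconj_chain' hqs (idx3 hs) (idx3 hp) hqs' (idx2 hp) (idx2 hs) v (YY ^ m * h)]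
        exact Subgroup.mul_mem _ (hgeq ▸ hgmem) (mem_row I hs ⟨-(h * v), by ring⟩)
      by_cases h2 : p = sw s
      · subst h2
        have e1 : g = uoe s (sw ((0,0) : Fin n × Fin 2)) (-(YY ^ m * h)) := by
          rw [hgeq, guoe_swap (idx2 hs) (by rw [sw_sw]; exact idx1 hs), sw_sw]
        rw [e1, gconj_chain hqs (idx4 hs) (idx4 hq) hqs'
          (by rw [sw_sw]; exact idx3 hs) (by rw [sw_sw]; exact idx3 hq) v (-(YY ^ m * h))]
        refine Subgroup.mul_mem _ (e1 ▸ hgmem) ?_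
        rw [guoe_swap (idx4 hq) (by rw [sw_sw]; exact idx3 hq), sw_sw]
        exact mem_row I (by rw [fst_sw]; exact hq) ⟨v * h, by ring⟩
      by_cases h3 : p = s
      · subst h3
        rw [hgeq, conj_of_comm (gcomm₃ hqs hqs' (idx1 hp) (idx2 hp) v (YY ^ m * h))]
        exact hgeq ▸ hgmem
      by_cases h4 : p = sw q
      · subst h4
        have e1 : g = uoe q (sw ((0,0) : Fin n × Fin 2)) (-(YY ^ m * h)) := by
          rw [hgeq, guoe_swap (idx2 hq) (by rw [sw_sw]; exact idx1 hq), sw_sw]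
        rw [e1, conj_of_comm (gcomm₂ hqs hqs' (idx4 hq)
          (by rw [sw_sw]; exact idx3 hq) v (-(YY ^ m * h)))]
        exact e1 ▸ hgmem
      · rw [hgeq, conj_of_comm (gcomm₁ hqs hqs' (idx1 hp) (idx2 hp) (idx3 hs)
          (fun he => h1 he.symm) (ne_sw_comm (h2 : p ≠ sw s)) (idx4 hq) v (YY ^ m * h))]
        exact hgeq ▸ hgmem
    · -- column generator
      have hgeq : g = uoe p (0,0) (YY ^ m * h) := eq_uoe (idx3 hp) (idx4 hp) g hcol
      by_cases h1 : p = q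
      · subst h1
        rw [hgeq, conj_of_comm (gcomm₂ hqs hqs' (idx3 hp) (idx4 hp) v (YY ^ m * h))]
        exact hgeq ▸ hgmem
      by_cases h2 : p = s
      · subst h2
        rw [hgeq, gconj_chain hqs (idx3 hs) (idx3 hq) hqs' (idx4 hs) (idx4 hq) v (YY ^ m * h)]
        exact Subgroup.mul_mem _ (hgeq ▸ hgmem)
          (mem_col I hq ⟨v * h, Ideal.mul_mem_left _ _ hh, by ring⟩)
      by_cases h3 : p = sw s
      · subst h3
        have e1 : g = uoe (sw ((0,0) : Fin n × Fin 2)) s (-(YY ^ m * h)) := by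
          rw [hgeq, guoe_swap (idx3 hp) (sw_ne_sw (idx3 hs)), sw_sw]
        rw [e1, conj_of_comm (gcomm₃ hqs hqs' (idx6 hs) (sw_ne_sw (idx1 hs)) v (-(YY ^ m * h)))]
        exact e1 ▸ hgmem
      by_cases h4 : p = sw q
      · subst h4
        have e1 : g = uoe (sw ((0,0) : Fin n × Fin 2)) q (-(YY ^ m * h)) := by
          rw [hgeq, guoe_swap (idx3 hp) (sw_ne_sw (idx3 hq)), sw_sw]
        rw [e1, gconj_chain' hqs (idx4 hs) (idx4 hq) hqs' (sw_ne_sw (idx1 hq))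
          (sw_ne_sw (idx1 hs)) v (-(YY ^ m * h))]
        refine Subgroup.mul_mem _ (e1 ▸ hgmem) ?_
        rw [guoe_swap (idx6 hs) (sw_ne_sw (idx1 hs)), sw_sw]
        exact mem_col I (by rw [fst_sw]; exact hs)
          ⟨-(h * v), (Jset I).neg_mem (Ideal.mul_mem_right _ _ hh), by ring⟩
      · rw [hgeq, conj_of_comm (gcomm₁ hqs hqs' (idx3 hp) (idx4 hp) (fun he => h2 he.symm)
          (idx3 hq) (idx4 hs) (ne_sw_comm (h4 : p ≠ sw q)) v (YY ^ m * h))]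
        exact hgeq ▸ hgmem

lemma exists_third (hn : 3 ≤ n) (a : Fin n) : ∃ c : Fin n, c ≠ 0 ∧ c ≠ a := by
  by_cases ha : a = (⟨1, by omega⟩ : Fin n)
  · refine ⟨⟨2, by omega⟩, ?_, ?_⟩
    · intro he; have := congrArg Fin.val he
      simp [Fin.val_zero] at this
    · rw [ha]; intro he; have := congrArg Fin.val he; simp at this
  · refine ⟨⟨1, by omega⟩, ?_, fun he => ha he.symm⟩
    intro he; have := congrArg Fin.val he
    simp [Fin.val_zero] at this

set_option maxHeartbeats 2000000 in
lemma conj_step (hn : 3 ≤ n) {m : ℕ} {e : GL (Fin n × Fin 2) (MvPolynomial (Fin 2) R)}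
    (he : ∃ q : Fin n × Fin 2, q.1 ≠ 0 ∧
      ((∃ a : MvPolynomial (Fin 2) R,
          (e : Matrix (Fin n × Fin 2) (Fin n × Fin 2) (MvPolynomial (Fin 2) R)) =
            oe (MvPolynomial (Fin 2) R) (0,0) q a) ∨
        (∃ x ∈ Jset I,
          (e : Matrix (Fin n × Fin 2) (Fin n × Fin 2) (MvPolynomial (Fin 2) R)) =
            oe (MvPolynomial (Fin 2) R) q (0,0) x)))
    {u : GL (Fin n × Fin 2) (MvPolynomial (Fin 2) R)} (hu : u ∈ Hgr I (4*m)) :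
    e * u * e⁻¹ ∈ Hgr I m := by
  induction hu using Subgroup.closure_induction with
  | one =>
    have : e * 1 * e⁻¹ = 1 := by group
    rw [this]; exact Subgroup.one_mem _
  | mul a b ha hb iha ihb =>
    have : e * (a * b) * e⁻¹ = (e * a * e⁻¹) * (e * b * e⁻¹) := by group
    rw [this]; exact Subgroup.mul_mem _ iha ihb
  | inv a ha iha =>
    have : e * a⁻¹ * e⁻¹ = (e * a * e⁻¹)⁻¹ := by group
    rw [this]; exact Subgroup.inv_mem _ iha
  | mem g hg =>
    obtain ⟨q, hq, he'⟩ := he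
    obtain ⟨c, hc0, hcq⟩ := exists_third hn q.1
    set k : Fin n × Fin 2 := (c, (0 : Fin 2)) with hkdef
    have hk : k.1 ≠ 0 := hc0
    have hkq : k ≠ q := ne_of_fst_ne hcq
    have hkq' : k ≠ sw q := ne_of_fst_ne hcq
    have hqk : q ≠ k := hkq.symm
    have hqk' : q ≠ sw k := fun heq => hcq (congrArg Prod.fst heq).symm
    have hgmem : g ∈ Hgr I m :=
      Subgroup.subset_closure (TS_mono I (by omega : m ≤ 4*m) hg)
    obtain ⟨p, h, hp, hrow | ⟨hh, hcol⟩⟩ := hg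
    · -- generator is a row
      have hgeq : g = uoe (0,0) p (YY ^ (4*m) * h) := eq_uoe (idx1 hp) (idx2 hp) g hrow
      rcases he' with ⟨a, hea⟩ | ⟨xx, hxx, hex⟩
      · -- e row, g row : commute
        have heq : e = uoe (0,0) q a := eq_uoe (idx1 hq) (idx2 hq) e hea
        rw [heq, hgeq, conj_of_comm (gcomm₂ (idx1 hq) (idx2 hq) (idx1 hp) (idx2 hp) a _)]
        exact hgeq ▸ hgmem
      · -- e col, g row
        have heq : e = uoe q (0,0) xx := eq_uoe (idx3 hq) (idx4 hq) e hex
        by_cases h1 : p = q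
        · -- opposite case
          subst h1
          rw [heq, hgeq]
          set z1 : MvPolynomial (Fin 2) R := YY ^ (2*m) with hz1
          set z2 : MvPolynomial (Fin 2) R := YY ^ (2*m) * h with hz2
          set P := uoe ((0,0) : Fin n × Fin 2) k z1 with hP
          set D := uoe k p z2 with hD
          set cc := uoe p k (xx * z1) with hcc
          set dd := uoe k ((0,0) : Fin n × Fin 2) (-(z2 * xx)) with hdd
          have hg2 : uoe ((0,0) : Fin n × Fin 2) p (YY ^ (4*m) * h) =
              D⁻¹ * (P * D * P⁻¹) := by
            rw [gconj_chain (idx1 hk) hkq (idx1 hp) (idx2 hk) hkq' (idx2 hp) z1 z2]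
            have : z1 * z2 = YY ^ (4*m) * h := by rw [hz1, hz2]; ring
            rw [this]; exact (inv_mul_cancel_left D _).symm
          have hPe : uoe p (0,0) xx * P * (uoe p (0,0) xx)⁻¹ = P * cc :=
            gconj_chain (idx3 hp) (idx1 hk) hqk (idx4 hp) (idx2 hk) hqk' xx z1
          have hDe : uoe p (0,0) xx * D * (uoe p (0,0) xx)⁻¹ = D * dd :=
            gconj_chain' (idx3 hp) (idx1 hk) hqk (idx4 hp) hkq' (idx4 hk) xx z2
          have key : uoe p (0,0) xx * uoe ((0,0) : Fin n × Fin 2) p (YY ^ (4*m) * h) *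
              (uoe p (0,0) xx)⁻¹ =
              dd⁻¹ * ((D⁻¹ * (P * cc) * D) * (dd * cc⁻¹ * P⁻¹)) := by
            have h4 : uoe p (0,0) xx * D⁻¹ * (uoe p (0,0) xx)⁻¹ = (D * dd)⁻¹ := by
              rw [← hDe]; group
            have h5 : uoe p (0,0) xx * P⁻¹ * (uoe p (0,0) xx)⁻¹ = (P * cc)⁻¹ := by
              rw [← hPe]; group
            calc uoe p (0,0) xx * uoe ((0,0) : Fin n × Fin 2) p (YY ^ (4*m) * h) *
                (uoe p (0,0) xx)⁻¹
                = (uoe p (0,0) xx * D⁻¹ * (uoe p (0,0) xx)⁻¹) *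
                  (uoe p (0,0) xx * P * (uoe p (0,0) xx)⁻¹) *
                  (uoe p (0,0) xx * D * (uoe p (0,0) xx)⁻¹) *
                  (uoe p (0,0) xx * P⁻¹ * (uoe p (0,0) xx)⁻¹) := by rw [hg2]; group
              _ = (D * dd)⁻¹ * (P * cc) * (D * dd) * (P * cc)⁻¹ := by rw [hPe, hDe, h4, h5]
              _ = dd⁻¹ * ((D⁻¹ * (P * cc) * D) * (dd * cc⁻¹ * P⁻¹)) := by group
          rw [key]
          have hPmem : P ∈ Hgr I m := mem_row I hk ⟨YY ^ m, by rw [hz1]; ring⟩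
          have hccmem : cc ∈ Hgr I m := mem_two I hp hk hqk hqk'
            ⟨xx, hxx, by rw [hz1]; ring⟩
          have hddmem : dd ∈ Hgr I m := mem_col I hk
            ⟨-(YY ^ m * h * xx), (Jset I).neg_mem (Ideal.mul_mem_left _ _ hxx),
              by rw [hz2]; ring⟩
          refine Subgroup.mul_mem _ (Subgroup.inv_mem _ hddmem) ?_
          refine Subgroup.mul_mem _ ?_ (Subgroup.mul_mem _ (Subgroup.mul_mem _ hddmem
            (Subgroup.inv_mem _ hccmem)) (Subgroup.inv_mem _ hPmem))
          have hDinv : D⁻¹ = uoe k p (-z2) := uoe_inv hkq hkq' z2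
          have inner : P * cc ∈ Hgr I m := Subgroup.mul_mem _ hPmem hccmem
          have h7 := conj_norm I hk hp hkq hkq' (-z2) inner
          have h6 : (uoe k p (-z2))⁻¹ = D := by rw [uoe_inv hkq hkq', neg_neg]
          rw [h6, ← hDinv] at h7
          exact h7
        · -- e col, g row, p ≠ q : mixed or commute
          by_cases h2 : p = sw q
          · subst h2
            have heq2 : e = uoe (sw (sw q)) ((0,0) : Fin n × Fin 2) xx := by
              rw [heq, sw_sw]
            have comm : e * g = g * e := by
              rw [heq2, hgeq]
              exact (gcomm₄ (idx2 hq) (by rw [sw_sw]; exact idx1 hq) (YY ^ (4*m) * h) xx).symm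
            rw [conj_of_comm comm]
            exact hgmem
          · -- mixed: chain
            rw [heq, hgeq, gconj_chain (idx3 hq) (idx1 hp) (fun he => h1 he.symm) (idx4 hq)
              (idx2 hp) (ne_sw_comm (h2 : p ≠ sw q)) xx (YY ^ (4*m) * h)]
            refine Subgroup.mul_mem _ (hgeq ▸ hgmem) ?_
            exact mem_two I hq hp (fun he => h1 he.symm) (ne_sw_comm (h2 : p ≠ sw q))
              ⟨xx * h * YY ^ (2*m), Ideal.mul_mem_right _ _ (Ideal.mul_mem_right _ _ hxx),
                by ring⟩
    · -- generator is a column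
      have hgeq : g = uoe p (0,0) (YY ^ (4*m) * h) := eq_uoe (idx3 hp) (idx4 hp) g hcol
      rcases he' with ⟨a, hea⟩ | ⟨xx, hxx, hex⟩
      · -- e row, g col
        have heq : e = uoe ((0,0) : Fin n × Fin 2) q a := eq_uoe (idx1 hq) (idx2 hq) e hea
        by_cases h1 : p = q
        · -- opposite case
          subst h1
          rw [heq, hgeq]
          set z1 : MvPolynomial (Fin 2) R := YY ^ (2*m) with hz1
          set z2 : MvPolynomial (Fin 2) R := YY ^ (2*m) * h with hz2
          set P := uoe p k z1 with hP
          set D := uoe k ((0,0) : Fin n × Fin 2) z2 with hD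
          set cc := uoe ((0,0) : Fin n × Fin 2) k (a * z1) with hcc
          set dd := uoe k p (-(z2 * a)) with hdd
          have hg2 : uoe p ((0,0) : Fin n × Fin 2) (YY ^ (4*m) * h) =
              D⁻¹ * (P * D * P⁻¹) := by
            rw [gconj_chain hqk (idx3 hk) (idx3 hp) hqk' (idx4 hk) (idx4 hp) z1 z2]
            have : z1 * z2 = YY ^ (4*m) * h := by rw [hz1, hz2]; ring
            rw [this]; exact (inv_mul_cancel_left D _).symm
          have hPe : uoe ((0,0) : Fin n × Fin 2) p a * P *
              (uoe ((0,0) : Fin n × Fin 2) p a)⁻¹ = P * cc :=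
            gconj_chain (idx1 hp) hqk (idx1 hk) (idx2 hp) hqk' (idx2 hk) a z1
          have hDe : uoe ((0,0) : Fin n × Fin 2) p a * D *
              (uoe ((0,0) : Fin n × Fin 2) p a)⁻¹ = D * dd :=
            gconj_chain' (idx1 hp) hqk (idx1 hk) (idx2 hp) (idx4 hk) hkq' a z2
          have key : uoe ((0,0) : Fin n × Fin 2) p a * uoe p (0,0) (YY ^ (4*m) * h) *
              (uoe ((0,0) : Fin n × Fin 2) p a)⁻¹ =
              dd⁻¹ * D⁻¹ * (P * (cc * D * dd * cc⁻¹) * P⁻¹) := by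
            have h4 : uoe ((0,0) : Fin n × Fin 2) p a * D⁻¹ *
                (uoe ((0,0) : Fin n × Fin 2) p a)⁻¹ = (D * dd)⁻¹ := by rw [← hDe]; group
            have h5 : uoe ((0,0) : Fin n × Fin 2) p a * P⁻¹ *
                (uoe ((0,0) : Fin n × Fin 2) p a)⁻¹ = (P * cc)⁻¹ := by rw [← hPe]; group
            calc uoe ((0,0) : Fin n × Fin 2) p a * uoe p (0,0) (YY ^ (4*m) * h) *
                (uoe ((0,0) : Fin n × Fin 2) p a)⁻¹
                = (uoe ((0,0) : Fin n × Fin 2) p a * D⁻¹ *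
                    (uoe ((0,0) : Fin n × Fin 2) p a)⁻¹) *
                  (uoe ((0,0) : Fin n × Fin 2) p a * P * (uoe ((0,0) : Fin n × Fin 2) p a)⁻¹) *
                  (uoe ((0,0) : Fin n × Fin 2) p a * D * (uoe ((0,0) : Fin n × Fin 2) p a)⁻¹) *
                  (uoe ((0,0) : Fin n × Fin 2) p a * P⁻¹ *
                    (uoe ((0,0) : Fin n × Fin 2) p a)⁻¹) := by rw [hg2]; group
              _ = (D * dd)⁻¹ * (P * cc) * (D * dd) * (P * cc)⁻¹ := by rw [hPe, hDe, h4, h5]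
              _ = dd⁻¹ * D⁻¹ * (P * (cc * D * dd * cc⁻¹) * P⁻¹) := by group
          rw [key]
          have hDmem : D ∈ Hgr I m := mem_col I hk
            ⟨YY ^ m * h, Ideal.mul_mem_left _ _ hh, by rw [hz2]; ring⟩
          have hccmem : cc ∈ Hgr I m := mem_row I hk ⟨a * YY ^ m, by rw [hz1]; ring⟩
          have hddmem : dd ∈ Hgr I m := mem_two I hk hp hkq hkq'
            ⟨-(h * a), (Jset I).neg_mem (Ideal.mul_mem_right _ _ hh), by rw [hz2]; ring⟩
          refine Subgroup.mul_mem _ (Subgroup.mul_mem _ (Subgroup.inv_mem _ hddmem)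
            (Subgroup.inv_mem _ hDmem)) ?_
          have inner : cc * D * dd * cc⁻¹ ∈ Hgr I m :=
            Subgroup.mul_mem _ (Subgroup.mul_mem _ (Subgroup.mul_mem _ hccmem hDmem) hddmem)
              (Subgroup.inv_mem _ hccmem)
          exact conj_norm I hp hk hqk hqk' z1 inner
        · by_cases h2 : p = sw q
          · subst h2
            rw [heq, hgeq, conj_of_comm (gcomm₄ (idx1 hq) (idx2 hq) a (YY ^ (4*m) * h))]
            exact hgeq ▸ hgmem
          · rw [heq, hgeq, gconj_chain' (idx1 hq) (fun he => h1 he.symm) (idx1 hp) (idx2 hq)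
              (idx7 hp) (h2 : p ≠ sw q) a (YY ^ (4*m) * h)]
            refine Subgroup.mul_mem _ (hgeq ▸ hgmem) ?_
            exact mem_two I hp hq h1 (h2 : p ≠ sw q)
              ⟨-(YY ^ (2*m) * h * a), (Jset I).neg_mem (Ideal.mul_mem_right _ _
                (Ideal.mul_mem_left _ _ hh)), by ring⟩
      · -- e col, g col : commute
        have heq : e = uoe q (0,0) xx := eq_uoe (idx3 hq) (idx4 hq) e hex
        rw [heq, hgeq, conj_of_comm (gcomm₃ (idx3 hq) (idx4 hq) (idx3 hp) (idx4 hp) xx _)]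
        exact hgeq ▸ hgmem

lemma mem_Jset {h : MvPolynomial (Fin 2) R} :
    h ∈ Jset I ↔ ∀ m, MvPolynomial.coeff m h ∈ I := Iff.rfl

lemma eval2_mem_Jset {f : Polynomial R} (hf : ∀ k, f.coeff k ∈ I)
    (w : MvPolynomial (Fin 2) R) :
    Polynomial.eval₂ (MvPolynomial.C : R →+* MvPolynomial (Fin 2) R) w f ∈ Jset I := by
  rw [Polynomial.eval₂_eq_sum, Polynomial.sum]
  exact Ideal.sum_mem _ (fun k _ =>
    Ideal.mul_mem_right _ _ (C_mem_Jset I (hf k)))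

lemma conj_list (hn : 3 ≤ n) (l : List (GL (Fin n × Fin 2) R))
    (hl : ∀ g ∈ l, ∃ p : Fin n × Fin 2, p.1 ≠ 0 ∧
      ((∃ a : R, (g : Matrix (Fin n × Fin 2) (Fin n × Fin 2) R) = oe R (0, 0) p a) ∨
        (∃ x ∈ I, (g : Matrix (Fin n × Fin 2) (Fin n × Fin 2) R) = oe R p (0, 0) x))) :
    ∀ (m : ℕ) (u : GL (Fin n × Fin 2) (MvPolynomial (Fin 2) R)),
      u ∈ Hgr I (4 ^ l.length * m) →
      Units.map ((MvPolynomial.C : R →+* MvPolynomial (Fin 2) R).mapMatrix.toMonoidHom) l.prod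
        * u *
      (Units.map ((MvPolynomial.C : R →+* MvPolynomial (Fin 2) R).mapMatrix.toMonoidHom)
        l.prod)⁻¹ ∈ Hgr I m := by
  induction l with
  | nil =>
    intro m u hu
    simp only [List.prod_nil, _root_.map_one, one_mul, inv_one, mul_one]
    simpa using hu
  | cons e t ih =>
    intro m u hu
    have hbudget : 4 ^ (e :: t).length * m = 4 ^ t.length * (4 * m) := by
      simp only [List.length_cons, pow_succ]; ring
    rw [hbudget] at hu
    have hinner := ih (fun g hg => hl g (List.mem_cons_of_mem e hg)) (4*m) u hu
    rw [List.prod_cons, _root_.map_mul]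
    set Φe := Units.map
      ((MvPolynomial.C : R →+* MvPolynomial (Fin 2) R).mapMatrix.toMonoidHom) e with hΦe
    set Φt := Units.map
      ((MvPolynomial.C : R →+* MvPolynomial (Fin 2) R).mapMatrix.toMonoidHom) t.prod with hΦt
    have hconj : (Φe * Φt) * u * (Φe * Φt)⁻¹ = Φe * (Φt * u * Φt⁻¹) * Φe⁻¹ := by group
    rw [hconj]
    refine conj_step I hn ?_ hinner
    obtain ⟨p, hp, hrc⟩ := hl e (List.mem_cons_self)
    refine ⟨p, hp, ?_⟩
    rcases hrc with ⟨a, ha⟩ | ⟨x, hx, hxe⟩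
    · left
      refine ⟨MvPolynomial.C a, ?_⟩
      rw [hΦe, Units.coe_map]
      show MvPolynomial.C.mapMatrix ((e : Matrix (Fin n × Fin 2) (Fin n × Fin 2) R)) = _
      rw [RingHom.mapMatrix_apply, ha, oe_map]
    · right
      refine ⟨MvPolynomial.C x, C_mem_Jset I hx, ?_⟩
      rw [hΦe, Units.coe_map]
      show MvPolynomial.C.mapMatrix ((e : Matrix (Fin n × Fin 2) (Fin n × Fin 2) R)) = _
      rw [RingHom.mapMatrix_apply, hxe, oe_map]

end Membership
end Test


open MvPolynomial in
/-- Lemma 3.1: conjugating the generator oe_{ij}(Y^{4^r} X f(Y^{4^r} X)) by a product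
ε of r elementary generators of EO¹_{2n}(R,I) yields a product of elements
oe_{i_t j_t}(Y h_t(X,Y)) with i_t = 1 or j_t = 1, where h_t has coefficients in R
(resp. in I) when i_t = 1 (resp. j_t = 1). Here R[X,Y] is `MvPolynomial (Fin 2) R`
with X = X 0, Y = X 1. -/
theorem conjugate_generator_decomposition
    {n : ℕ} {R : Type*} [CommRing R] (I : Ideal R) (hn : 3 ≤ n) [NeZero n]
    (r : ℕ) (εs : List (GL (Fin n × Fin 2) R)) (hr : εs.length = r)
    (hgen : ∀ g ∈ εs, ∃ p : Fin n × Fin 2, p.1 ≠ 0 ∧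
      ((∃ a : R, (g : Matrix (Fin n × Fin 2) (Fin n × Fin 2) R) = oe R (0, 0) p a) ∨
        (∃ x ∈ I, (g : Matrix (Fin n × Fin 2) (Fin n × Fin 2) R) = oe R p (0, 0) x)))
    (ε : GL (Fin n × Fin 2) R) (hε : ε = εs.prod)
    (i j : Fin n × Fin 2) (hij : i ≠ j) (hisj : i ≠ sw j)
    (f : Polynomial R)
    (hgen' : (i = (0, 0) ∧ j.1 ≠ 0) ∨
      (j = (0, 0) ∧ i.1 ≠ 0 ∧ ∀ k, f.coeff k ∈ I)) :
    ∀ u : GL (Fin n × Fin 2) (MvPolynomial (Fin 2) R),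
      (u : Matrix (Fin n × Fin 2) (Fin n × Fin 2) (MvPolynomial (Fin 2) R)) =
        oe (MvPolynomial (Fin 2) R) i j
          ((X 1) ^ (4 ^ r) * (X 0) *
            Polynomial.eval₂ (C : R →+* MvPolynomial (Fin 2) R)
              ((X 1) ^ (4 ^ r) * (X 0)) f) →
      ∃ L : List (GL (Fin n × Fin 2) (MvPolynomial (Fin 2) R)),
        (∀ g ∈ L, ∃ p : Fin n × Fin 2, ∃ h : MvPolynomial (Fin 2) R, p.1 ≠ 0 ∧
          ((g : Matrix (Fin n × Fin 2) (Fin n × Fin 2) (MvPolynomial (Fin 2) R)) =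
              oe (MvPolynomial (Fin 2) R) (0, 0) p ((X 1) * h) ∨
            ((∀ m, coeff m h ∈ I) ∧
              (g : Matrix (Fin n × Fin 2) (Fin n × Fin 2) (MvPolynomial (Fin 2) R)) =
                oe (MvPolynomial (Fin 2) R) p (0, 0) ((X 1) * h)))) ∧
        Units.map ((C : R →+* MvPolynomial (Fin 2) R).mapMatrix.toMonoidHom) ε * u *
          (Units.map ((C : R →+* MvPolynomial (Fin 2) R).mapMatrix.toMonoidHom) ε)⁻¹ =
          L.prod := by
  classical
  intro u hu
  have hU : u ∈ Test.TS I (4 ^ r) := by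
    rcases hgen' with ⟨hi, hj⟩ | ⟨hj, hi, hf⟩
    · refine ⟨j, X 0 * Polynomial.eval₂ (C : R →+* MvPolynomial (Fin 2) R)
        ((X 1) ^ (4 ^ r) * (X 0)) f, hj, Or.inl ?_⟩
      rw [hu, hi, mul_assoc]
    · refine ⟨i, X 0 * Polynomial.eval₂ (C : R →+* MvPolynomial (Fin 2) R)
        ((X 1) ^ (4 ^ r) * (X 0)) f, hi, Or.inr ⟨?_, ?_⟩⟩
      · exact Ideal.mul_mem_left _ _ (Test.eval2_mem_Jset I hf _)
      · rw [hu, hj, mul_assoc]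
  have hU' : u ∈ Test.Hgr I (4 ^ εs.length * 1) := by
    rw [hr, mul_one]
    exact Subgroup.subset_closure hU
  have hmem := Test.conj_list I hn εs hgen 1 u hU'
  have hmem2 : Units.map ((C : R →+* MvPolynomial (Fin 2) R).mapMatrix.toMonoidHom) εs.prod * u *
      (Units.map ((C : R →+* MvPolynomial (Fin 2) R).mapMatrix.toMonoidHom) εs.prod)⁻¹ ∈
      (Subgroup.closure (Test.TS I 1)).toSubmonoid := hmem
  rw [Subgroup.closure_toSubmonoid] at hmem2
  obtain ⟨L, hL, hLp⟩ := Submonoid.exists_list_of_mem_closure hmem2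
  refine ⟨L, ?_, by rw [hε]; exact hLp.symm⟩
  intro g hgL
  rcases hL g hgL with hTS | hTSinv
  · obtain ⟨p, h, hp, hrow | ⟨hh, hcol⟩⟩ := hTS
    · exact ⟨p, h, hp, Or.inl (by rw [hrow, pow_one])⟩
    · exact ⟨p, h, hp, Or.inr ⟨hh, by rw [hcol, pow_one]⟩⟩
  · have hginv : g⁻¹ ∈ Test.TS I 1 := Set.mem_inv.mp hTSinv
    obtain ⟨p, h, hp, hrow | ⟨hh, hcol⟩⟩ := hginv
    · have h1 : g⁻¹ = Test.uoe (0,0) p ((X 1 : MvPolynomial (Fin 2) R) ^ 1 * h) :=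
        Test.eq_uoe (Test.idx1 hp) (Test.idx2 hp) _ hrow
      have h2 : g = Test.uoe (0,0) p (-((X 1 : MvPolynomial (Fin 2) R) ^ 1 * h)) := by
        rw [← inv_inv g, h1, Test.uoe_inv (Test.idx1 hp) (Test.idx2 hp)]
      refine ⟨p, -h, hp, Or.inl ?_⟩
      rw [h2, Test.uoe_coe (Test.idx1 hp) (Test.idx2 hp)]
      congr 1
      ring
    · have h1 : g⁻¹ = Test.uoe p (0,0) ((X 1 : MvPolynomial (Fin 2) R) ^ 1 * h) :=
        Test.eq_uoe (Test.idx3 hp) (Test.idx4 hp) _ hcol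
      have h2 : g = Test.uoe p (0,0) (-((X 1 : MvPolynomial (Fin 2) R) ^ 1 * h)) := by
        rw [← inv_inv g, h1, Test.uoe_inv (Test.idx3 hp) (Test.idx4 hp)]
      refine ⟨p, -h, hp, Or.inr ⟨fun m => ?_, ?_⟩⟩
      · rw [MvPolynomial.coeff_neg]; exact neg_mem (hh m)
      · rw [h2, Test.uoe_coe (Test.idx3 hp) (Test.idx4 hp)]
        congr 1
        ring
end

section
/- Let M be a finitely presented R-module, I an ideal, and α(X), β(X) ∈ End(M[X]) both congruent to an endomorphism of M[X]/IM[X] that they agree on modulo I, with α(0) = β(0). If a ∈ R is non-nilpotent and α(X)_a = β(X)_a in End(M_a[X]), then α(a^N X) = β(a^N X) in End(M[X]) for N sufficiently large. -/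
/-!
Since `M` is finitely generated, equality of `α` and `β` after inverting `a` yields one exponent
`K` with `a ^ K • (α - β) (1 ⊗ m) = 0` for all `m`. Hence every coefficient of
`y = (α - β) (1 ⊗ m)` is killed by `a ^ K`, and its constant coefficient vanishes by `h0`.
The substitution `X ↦ a ^ N X` multiplies the `j`-th coefficient by `a ^ (N * j)`, which kills it
once `N ≥ K` and `j ≥ 1`.
-/

open TensorProduct Polynomial

theorem Polynomial.coeff_aeval_C_mul_X {R : Type*} [CommSemiring R] (c : R) (p : R[X]) (j : ℕ) :
    (aeval (C c * X) p).coeff j = c ^ j * p.coeff j := by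
  induction p using Polynomial.induction_on' with
  | add p q hp hq => simp [hp, hq, mul_add]
  | monomial n r =>
    rw [aeval_monomial, mul_pow, ← C_pow, algebraMap_eq, ← mul_assoc, ← C_mul, coeff_C_mul_X_pow,
      coeff_monomial]
    split_ifs <;> simp_all [mul_comm]

theorem LocalizedModule.exists_smul_comp_eq_of_map_eq {R : Type*} [CommRing R] (S : Submonoid R)
    {M N P : Type*} [AddCommGroup M] [Module R M] [Module.Finite R M]
    [AddCommGroup N] [Module R N] [AddCommGroup P] [Module R P]
    {f g : N →ₗ[R] P} (hfg : LocalizedModule.map S f = LocalizedModule.map S g) (ι : M →ₗ[R] N) :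
    ∃ s : S, s • (f ∘ₗ ι) = s • (g ∘ₗ ι) := by
  refine Module.Finite.exists_smul_of_comp_eq_of_isLocalizedModule S
    (LocalizedModule.mkLinearMap S P) _ _ (LinearMap.ext fun x => ?_)
  simpa using LinearMap.congr_fun hfg (LocalizedModule.mk (ι x) 1)

namespace TensorProduct

variable {R : Type*} [CommRing R] {M : Type*} [AddCommGroup M] [Module R M]

noncomputable def polyCoeff (j : ℕ) : R[X] ⊗[R] M →ₗ[R] M :=
  TensorProduct.lid R M ∘ₗ TensorProduct.map (lcoeff R j) LinearMap.id

@[simp]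
theorem polyCoeff_tmul (j : ℕ) (p : R[X]) (m : M) : polyCoeff j (p ⊗ₜ m) = p.coeff j • m := by
  simp [polyCoeff]

theorem coeff_polynomialTensorProductLEquivPolynomialModule (y : R[X] ⊗[R] M) (j : ℕ) :
    (PolynomialModule.polynomialTensorProductLEquivPolynomialModule R M y).coeff j =
      polyCoeff j y := by
  induction y with
  | zero => simp
  | tmul p m =>
    simp [PolynomialModule.polynomialTensorProductLEquivPolynomialModule, PolynomialModule.lsingle]
  | add y z hy hz => simp [hy, hz]

theorem ext_polyCoeff {y z : R[X] ⊗[R] M} (h : ∀ j, polyCoeff j y = polyCoeff j z) : y = z := by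
  apply (PolynomialModule.polynomialTensorProductLEquivPolynomialModule R M).injective
  ext j
  simp only [coeff_polynomialTensorProductLEquivPolynomialModule, h]

theorem polyCoeff_map_aeval_C_mul_X (c : R) (y : R[X] ⊗[R] M) (j : ℕ) :
    polyCoeff j (map (aeval (C c * X)).toLinearMap LinearMap.id y) = c ^ j • polyCoeff j y := by
  induction y with
  | zero => simp
  | tmul p m => simp [coeff_aeval_C_mul_X, mul_smul]
  | add y z hy hz => simp [hy, hz]

theorem map_aeval_C_pow_mul_X_eq_zero {a : R} {K N : ℕ} (hKN : K ≤ N) {y : R[X] ⊗[R] M}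
    (hy : a ^ K • y = 0) (hy₀ : map (lcoeff R 0) LinearMap.id y = 0) :
    map (aeval (C (a ^ N) * X)).toLinearMap LinearMap.id y = 0 := by
  refine ext_polyCoeff fun j => ?_
  rw [polyCoeff_map_aeval_C_mul_X, map_zero]
  rcases j.eq_zero_or_pos with rfl | hj
  · simp [polyCoeff, hy₀]
  · obtain ⟨d, hd⟩ := Nat.exists_eq_add_of_le (hKN.trans (Nat.le_mul_of_pos_right N hj))
    rw [← pow_mul, hd, add_comm, pow_add, mul_smul, ← map_smul, hy, map_zero, smul_zero]

end TensorProduct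

theorem equal_endomorphisms_after_dilation_general
    {R : Type*} [CommRing R]
    (M : Type*) [AddCommGroup M] [Module R M]
    (hM : Module.FinitePresentation R M)
    (a : R)
    (α β : (Polynomial R ⊗[R] M) →ₗ[Polynomial R] (Polynomial R ⊗[R] M))
    (h0 : ∀ m : M,
      TensorProduct.map (Polynomial.lcoeff R 0) (LinearMap.id : M →ₗ[R] M)
          (α ((1 : Polynomial R) ⊗ₜ[R] m)) =
        TensorProduct.map (Polynomial.lcoeff R 0) (LinearMap.id : M →ₗ[R] M)
          (β ((1 : Polynomial R) ⊗ₜ[R] m)))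
    (hloc : LocalizedModule.map (Submonoid.powers a)
        (LinearMap.restrictScalars R α) =
      LocalizedModule.map (Submonoid.powers a)
        (LinearMap.restrictScalars R β)) :
    ∃ N₀ : ℕ, ∀ N ≥ N₀, ∀ m : M,
      TensorProduct.map
          ((Polynomial.aeval (Polynomial.C (a ^ N) * Polynomial.X :
            Polynomial R)).toLinearMap) (LinearMap.id : M →ₗ[R] M)
          (α ((1 : Polynomial R) ⊗ₜ[R] m)) =
        TensorProduct.map
          ((Polynomial.aeval (Polynomial.C (a ^ N) * Polynomial.X :
            Polynomial R)).toLinearMap) (LinearMap.id : M →ₗ[R] M)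
          (β ((1 : Polynomial R) ⊗ₜ[R] m)) := by
  have := hM
  obtain ⟨⟨_, K, rfl⟩, hK⟩ := LocalizedModule.exists_smul_comp_eq_of_map_eq _ hloc
    (TensorProduct.mk R R[X] M 1)
  refine ⟨K, fun N hN m => sub_eq_zero.mp ?_⟩
  rw [← map_sub]
  refine map_aeval_C_pow_mul_X_eq_zero hN ?_ (by rw [map_sub, h0, sub_self])
  rw [smul_sub, sub_eq_zero]
  exact LinearMap.congr_fun hK m

/-- Lemma 3.4 (Lemma `equal-auto`): for a finitely presented module M, if
α(X), β(X) ∈ End(M[X], IM[X]) with α(0) = β(0) and α(X)_a = β(X)_a over the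
localization at a non-nilpotent a, then α(a^N X) = β(a^N X) for N ≫ 0.
Here M[X] is realized as R[X] ⊗[R] M; "α(cX)" is characterized by its values on
the generators 1 ⊗ m via the substitution X ↦ cX on the first factor. -/
theorem equal_endomorphisms_after_dilation
    {R : Type*} [CommRing R] (I : Ideal R)
    (M : Type*) [AddCommGroup M] [Module R M]
    (hM : Module.FinitePresentation R M)
    (a : R) (ha : ¬ IsNilpotent a)
    (α β : (Polynomial R ⊗[R] M) →ₗ[Polynomial R] (Polynomial R ⊗[R] M))
    (hαI : ∀ x, α x ∈ (I • ⊤ : Submodule R (Polynomial R ⊗[R] M)))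
    (hβI : ∀ x, β x ∈ (I • ⊤ : Submodule R (Polynomial R ⊗[R] M)))
    (h0 : ∀ m : M,
      TensorProduct.map (Polynomial.lcoeff R 0) (LinearMap.id : M →ₗ[R] M)
          (α ((1 : Polynomial R) ⊗ₜ[R] m)) =
        TensorProduct.map (Polynomial.lcoeff R 0) (LinearMap.id : M →ₗ[R] M)
          (β ((1 : Polynomial R) ⊗ₜ[R] m)))
    (hloc : LocalizedModule.map (Submonoid.powers a)
        (LinearMap.restrictScalars R α) =
      LocalizedModule.map (Submonoid.powers a)
        (LinearMap.restrictScalars R β)) :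
    ∃ N₀ : ℕ, ∀ N ≥ N₀, ∀ m : M,
      TensorProduct.map
          ((Polynomial.aeval (Polynomial.C (a ^ N) * Polynomial.X :
            Polynomial R)).toLinearMap) (LinearMap.id : M →ₗ[R] M)
          (α ((1 : Polynomial R) ⊗ₜ[R] m)) =
        TensorProduct.map
          ((Polynomial.aeval (Polynomial.C (a ^ N) * Polynomial.X :
            Polynomial R)).toLinearMap) (LinearMap.id : M →ₗ[R] M)
          (β ((1 : Polynomial R) ⊗ₜ[R] m)) :=
  equal_endomorphisms_after_dilation_general M hM a α β h0 hloc
end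

section
/- Every element α of the orthogonal transvection group Trans_O(P, ⟨,⟩) is homotopic to the identity: there exists β(X) ∈ Trans_O(P[X], ⟨,⟩) with β(0) = Id and β(1) = α. -/
/-!
The elements of Trans_O(P) that are homotopic to the identity through Trans_O(P[X]) form a
subgroup, since specialisation X ↦ c is compatible with products and inverses. So it suffices
to treat a generator τ(u, v). If u is unimodular, the transvection τ(1 ⊗ u, X ⊗ v) over R[X] is
a homotopy: it specialises to τ(u, c • v), which is τ(u, 0) = 1 at c = 0 and τ(u, v) at c = 1.
If v is unimodular, scale u by X instead.
-/

open TensorProduct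

/-- The orthogonal transvection group Trans_O(P, B): the subgroup of the units of
End(P) generated by the transvections p ↦ p − B(u,p)•v + B(v,p)•u with u, v
isotropic, B(u,v) = 0, and u or v unimodular. -/
def TransO (R : Type*) [CommRing R] (P : Type*) [AddCommGroup P] [Module R P]
    (B : P →ₗ[R] P →ₗ[R] R) : Subgroup (Module.End R P)ˣ :=
  Subgroup.closure {g | ∃ u v : P,
    B u u = 0 ∧ B v v = 0 ∧ B u v = 0 ∧
    ((∃ f : P →ₗ[R] R, f u = 1) ∨ (∃ f : P →ₗ[R] R, f v = 1)) ∧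
    (g : Module.End R P) =
      LinearMap.id + LinearMap.smulRight (B v) u - LinearMap.smulRight (B u) v}

open Polynomial

section Transvection

variable {S Q : Type*} [CommRing S] [AddCommGroup Q] [Module S Q] (b : Q →ₗ[S] Q →ₗ[S] S)

def transvection (u v : Q) : Module.End S Q :=
  LinearMap.id + LinearMap.smulRight (b v) u - LinearMap.smulRight (b u) v

@[simp]
theorem transvection_apply (u v x : Q) : transvection b u v x = x + b v x • u - b u x • v :=
  rfl

@[simp]
theorem transvection_zero_left (v : Q) : transvection b 0 v = 1 := by
  ext x; simp

@[simp]
theorem transvection_zero_right (u : Q) : transvection b u 0 = 1 := by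
  ext x; simp

theorem transvection_mul_transvection_swap {u v : Q} (huu : b u u = 0) (hvv : b v v = 0)
    (huv : b u v = 0) (hvu : b v u = 0) : transvection b u v * transvection b v u = 1 := by
  ext x
  simp [huu, hvv, huv, hvu]

@[simps]
def transvectionUnit {u v : Q} (huu : b u u = 0) (hvv : b v v = 0) (huv : b u v = 0)
    (hvu : b v u = 0) : (Module.End S Q)ˣ where
  val := transvection b u v
  inv := transvection b v u
  val_inv := transvection_mul_transvection_swap b huu hvv huv hvu
  inv_val := transvection_mul_transvection_swap b hvv huu hvu huv

theorem transvectionUnit_mem_transO {u v : Q} (huu : b u u = 0) (hvv : b v v = 0)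
    (huv : b u v = 0) (hvu : b v u = 0)
    (hunimod : (∃ f : Q →ₗ[S] S, f u = 1) ∨ (∃ f : Q →ₗ[S] S, f v = 1)) :
    transvectionUnit b huu hvv huv hvu ∈ TransO S Q b :=
  Subgroup.subset_closure ⟨u, v, huu, hvv, huv, hunimod, rfl⟩

end Transvection

theorem Module.Dual.exists_baseChange_apply_one_tmul_eq_one {R A P : Type*} [CommSemiring R]
    [CommSemiring A] [Algebra R A] [AddCommMonoid P] [Module R P] {u : P}
    (h : ∃ f : P →ₗ[R] R, f u = 1) : ∃ f : A ⊗[R] P →ₗ[A] A, f (1 ⊗ₜ u) = 1 := by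
  obtain ⟨f, hf⟩ := h
  exact ⟨Module.Dual.baseChange A f, by simp [hf]⟩

section Specialization

variable {R P : Type*} [CommRing R] [AddCommGroup P] [Module R P]

variable (P) in
noncomputable def evalAt (c : R) : R[X] ⊗[R] P →ₗ[R] P :=
  (TensorProduct.lid R P).toLinearMap ∘ₗ TensorProduct.map (leval c) LinearMap.id

@[simp]
theorem evalAt_tmul (c : R) (f : R[X]) (p : P) : evalAt P c (f ⊗ₜ p) = f.eval c • p := by
  simp [evalAt]

variable (P) in
def SpecializesTo (c : R) (β : Module.End R[X] (R[X] ⊗[R] P)) (γ : Module.End R P) : Prop :=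
  ∀ z, evalAt P c (β z) = γ (evalAt P c z)

namespace SpecializesTo

variable {c : R}

theorem one : SpecializesTo P c (1 : Module.End R[X] (R[X] ⊗[R] P)) 1 := fun _ => rfl

theorem mul {β β' : Module.End R[X] (R[X] ⊗[R] P)} {γ γ' : Module.End R P}
    (h : SpecializesTo P c β γ) (h' : SpecializesTo P c β' γ') :
    SpecializesTo P c (β * β') (γ * γ') :=
  fun z => (h (β' z)).trans (congrArg γ (h' z))

theorem inv {β : (Module.End R[X] (R[X] ⊗[R] P))ˣ} {γ : (Module.End R P)ˣ}
    (h : SpecializesTo P c β γ) : SpecializesTo P c ↑β⁻¹ ↑γ⁻¹ := fun z => by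
  have hz := h ((↑β⁻¹ : Module.End R[X] (R[X] ⊗[R] P)) z)
  rw [← Module.End.mul_apply, Units.mul_inv, Module.End.one_apply] at hz
  rw [hz, ← Module.End.mul_apply, Units.inv_mul, Module.End.one_apply]

end SpecializesTo

theorem specializesTo_transvection_baseChange (B : P →ₗ[R] P →ₗ[R] R) (c : R) (a b : R[X])
    (u v : P) :
    SpecializesTo P c (transvection (LinearMap.BilinForm.baseChange R[X] B) (a ⊗ₜ u) (b ⊗ₜ v))
      (transvection B (a.eval c • u) (b.eval c • v)) := by
  intro z
  induction z using TensorProduct.induction_on with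
  | zero => simp
  | tmul f p =>
    simp only [transvection_apply, LinearMap.BilinForm.baseChange_tmul, smul_tmul', map_add,
      map_sub, evalAt_tmul, eval_smul, eval_mul, map_smul, LinearMap.smul_apply, smul_eq_mul,
      smul_smul]
    module
  | add z z' hz hz' => simp only [map_add, hz, hz']

def homotopicToOne (H : Subgroup (Module.End R[X] (R[X] ⊗[R] P))ˣ) :
    Subgroup (Module.End R P)ˣ where
  carrier := {α | ∃ β ∈ H, SpecializesTo P (0 : R) ↑β 1 ∧ SpecializesTo P (1 : R) ↑β ↑α}
  one_mem' := ⟨1, H.one_mem, SpecializesTo.one, SpecializesTo.one⟩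
  mul_mem' := by
    rintro α α' ⟨β, hβ, h₀, h₁⟩ ⟨β', hβ', h₀', h₁'⟩
    exact ⟨β * β', H.mul_mem hβ hβ', by simpa using h₀.mul h₀', h₁.mul h₁'⟩
  inv_mem' := by
    rintro α ⟨β, hβ, h₀, h₁⟩
    exact ⟨β⁻¹, H.inv_mem hβ, by simpa using SpecializesTo.inv (γ := 1) h₀, h₁.inv⟩

theorem mem_homotopicToOne_of_val_eq_transvection {B : P →ₗ[R] P →ₗ[R] R} {u v : P}
    (huu : B u u = 0) (hvv : B v v = 0) (huv : B u v = 0) (hvu : B v u = 0)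
    {g : (Module.End R P)ˣ} (hg : (g : Module.End R P) = transvection B u v) (a b : R[X])
    (h₀ : a.eval 0 = 0 ∨ b.eval 0 = 0) (ha₁ : a.eval 1 = 1) (hb₁ : b.eval 1 = 1)
    (hunimod : (∃ f : R[X] ⊗[R] P →ₗ[R[X]] R[X], f (a ⊗ₜ u) = 1) ∨
      (∃ f : R[X] ⊗[R] P →ₗ[R[X]] R[X], f (b ⊗ₜ v) = 1)) :
    g ∈ homotopicToOne (TransO R[X] (R[X] ⊗[R] P) (LinearMap.BilinForm.baseChange R[X] B)) := by
  refine ⟨transvectionUnit _ (by simp [huu]) (by simp [hvv]) (by simp [huv]) (by simp [hvu]),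
    transvectionUnit_mem_transO _ _ _ _ _ hunimod, ?_, ?_⟩
  · have h := specializesTo_transvection_baseChange B 0 a b u v
    rcases h₀ with h₀ | h₀ <;> simpa [h₀] using h
  · simpa [ha₁, hb₁, hg] using specializesTo_transvection_baseChange B 1 a b u v

theorem transO_le_homotopicToOne (B : P →ₗ[R] P →ₗ[R] R) (hsymm : ∀ x y, B x y = B y x) :
    TransO R P B ≤
      homotopicToOne (TransO R[X] (R[X] ⊗[R] P) (LinearMap.BilinForm.baseChange R[X] B)) := by
  refine (Subgroup.closure_le _).2 ?_
  rintro g ⟨u, v, huu, hvv, huv, hunimod, hg⟩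
  have hvu : B v u = 0 := (hsymm v u).trans huv
  rcases hunimod with hu | hv
  · exact mem_homotopicToOne_of_val_eq_transvection huu hvv huv hvu hg 1 X (by simp)
      (by simp) (by simp) (.inl (Module.Dual.exists_baseChange_apply_one_tmul_eq_one hu))
  · exact mem_homotopicToOne_of_val_eq_transvection huu hvv huv hvu hg X 1 (by simp)
      (by simp) (by simp) (.inr (Module.Dual.exists_baseChange_apply_one_tmul_eq_one hv))

end Specialization

theorem transvection_homotopic_to_identity_general
    {R : Type*} [CommRing R] (P : Type*) [AddCommGroup P] [Module R P]
    (B : P →ₗ[R] P →ₗ[R] R)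
    (hsymm : ∀ x y, B x y = B y x)
    (α : (Module.End R P)ˣ) (hα : α ∈ TransO R P B) :
    ∃ β ∈ TransO (Polynomial R) (Polynomial R ⊗[R] P)
        (LinearMap.BilinForm.baseChange (Polynomial R) B),
      (∀ p : P,
        (TensorProduct.lid R P)
          (TensorProduct.map (Polynomial.leval (0 : R)) (LinearMap.id : P →ₗ[R] P)
            ((β : Module.End (Polynomial R) (Polynomial R ⊗[R] P))
              ((1 : Polynomial R) ⊗ₜ[R] p))) = p) ∧
      (∀ p : P,
        (TensorProduct.lid R P)
          (TensorProduct.map (Polynomial.leval (1 : R)) (LinearMap.id : P →ₗ[R] P)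
            ((β : Module.End (Polynomial R) (Polynomial R ⊗[R] P))
              ((1 : Polynomial R) ⊗ₜ[R] p))) =
          (α : Module.End R P) p) := by
  obtain ⟨β, hβ, h₀, h₁⟩ := transO_le_homotopicToOne B hsymm hα
  exact ⟨β, hβ, fun p => (h₀ _).trans (by simp), fun p => (h₁ _).trans (by simp)⟩

/-- Every element of the orthogonal transvection group is homotopic to the
identity: there is β(X) ∈ Trans_O(P[X]) with β(0) = Id and β(1) = α. Here
P[X] = R[X] ⊗[R] P carries the extended (base-changed) form, and evaluation at
c ∈ R is induced by X ↦ c on the first tensor factor. -/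
theorem transvection_homotopic_to_identity
    {R : Type*} [CommRing R] (P : Type*) [AddCommGroup P] [Module R P]
    [Module.Finite R P] [Module.Projective R P]
    (B : P →ₗ[R] P →ₗ[R] R)
    (hsymm : ∀ x y, B x y = B y x)
    (hnd : Function.Bijective (B : P → P →ₗ[R] R))
    (α : (Module.End R P)ˣ) (hα : α ∈ TransO R P B) :
    ∃ β ∈ TransO (Polynomial R) (Polynomial R ⊗[R] P)
        (LinearMap.BilinForm.baseChange (Polynomial R) B),
      (∀ p : P,
        (TensorProduct.lid R P)
          (TensorProduct.map (Polynomial.leval (0 : R)) (LinearMap.id : P →ₗ[R] P)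
            ((β : Module.End (Polynomial R) (Polynomial R ⊗[R] P))
              ((1 : Polynomial R) ⊗ₜ[R] p))) = p) ∧
      (∀ p : P,
        (TensorProduct.lid R P)
          (TensorProduct.map (Polynomial.leval (1 : R)) (LinearMap.id : P →ₗ[R] P)
            ((β : Module.End (Polynomial R) (Polynomial R ⊗[R] P))
              ((1 : Polynomial R) ⊗ₜ[R] p))) =
          (α : Module.End R P) p) :=
  transvection_homotopic_to_identity_general P B hsymm α hα
end
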